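/- arXiv:2501.15550 — 6 statements merged into one kernel-verified Lean document; each statement's English description precedes it below -/
import Mathlib

section
/- For any n₁, ..., n_k ≥ 0 and matrices L = [[1,1],[0,1]], R = [[1,0],[1,1]], the trace of L(LR)^{n₁}R · L(LR)^{n₂}R ⋯ L(LR)^{n_k}R equals (1/(10^k · 2^{n₁+⋯+n_k})) · trace(A₁ ⋯ A_k), where A_l = [[3(ξ̄+2)ξ̄^{n_l}, 2(ξ+2)ξ^{n_l}],[2(ξ̄+2)ξ̄^{n_l}, 3(ξ+2)ξ^{n_l}]] with ξ = 3+√5, ξ̄ = 3-√5. -/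
open Matrix Real

noncomputable section

def Lm : Matrix (Fin 2) (Fin 2) ℝ := !![1,1;0,1]
def Rm : Matrix (Fin 2) (Fin 2) ℝ := !![1,0;1,1]

noncomputable def Am (m : ℕ) : Matrix (Fin 2) (Fin 2) ℝ :=
  !![3 * ((3 - Real.sqrt 5) + 2) * (3 - Real.sqrt 5) ^ m,
     2 * ((3 + Real.sqrt 5) + 2) * (3 + Real.sqrt 5) ^ m;
     2 * ((3 - Real.sqrt 5) + 2) * (3 - Real.sqrt 5) ^ m,
     3 * ((3 + Real.sqrt 5) + 2) * (3 + Real.sqrt 5) ^ m]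

/-!
The matrix `T = [[2, -ξ], [-ξ, 2]]` is invertible and intertwines every factor with the
corresponding `A`: `L (LR)^m R T = (10 · 2^m)⁻¹ T A_m`. Indeed `(LR)^m R = R G^m` for
`G = R⁻¹ (LR) R = [[3, 1], [-1, 0]]`, whose eigenvalues are `ξ̄/2` and `ξ/2`, and `T`
diagonalises it: `G T = ½ T diag(ξ̄, ξ)`. Together with `L R T = T A_0 / 10` and
`A_m = A_0 diag(ξ̄, ξ)^m` this gives the intertwining relation, so the whole product is
`T`-conjugate to the scaled product of the `A_l`, and conjugation preserves the trace.
-/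

section Intertwining

variable {R A : Type*} [CommSemiring R] [Semiring A] [Algebra R A]

theorem List.prod_ofFn_mul_eq_smul {k : ℕ} {f g : Fin k → A} {c : Fin k → R} {t : A}
    (h : ∀ i, f i * t = c i • (t * g i)) :
    (List.ofFn f).prod * t = (∏ i, c i) • (t * (List.ofFn g).prod) := by
  induction k with
  | zero => simp
  | succ k ih =>
    rw [List.ofFn_succ, List.ofFn_succ, List.prod_cons, List.prod_cons, Fin.prod_univ_succ,
      mul_assoc, ih (fun i => h i.succ), mul_smul_comm, ← mul_assoc, h 0, smul_mul_assoc,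
      smul_smul, mul_assoc, mul_comm (c 0)]

theorem pow_mul_eq_smul {g t d : A} {c : R} (h : g * t = c • (t * d)) (m : ℕ) :
    g ^ m * t = c ^ m • (t * d ^ m) := by
  simpa [List.ofFn_const, List.prod_replicate] using
    List.prod_ofFn_mul_eq_smul (k := m) (fun _ => h)

end Intertwining

theorem Matrix.trace_eq_mul_trace_of_mul_eq_smul {n R : Type*} [Fintype n] [DecidableEq n]
    [CommRing R] {M N T : Matrix n n R} {c : R} (hT : IsUnit T) (h : M * T = c • (T * N)) :
    trace M = c * trace N := by
  have hM : M = c • (T * N * T⁻¹) := by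
    rw [← smul_mul_assoc, ← h, mul_assoc, mul_nonsing_inv _ ((isUnit_iff_isUnit_det T).mp hT),
      mul_one]
  rw [hM, trace_smul, trace_conj hT, smul_eq_mul]

def Tm : Matrix (Fin 2) (Fin 2) ℝ := !![2, -(3 + √5); -(3 + √5), 2]

def Dm : Matrix (Fin 2) (Fin 2) ℝ := diagonal ![3 - √5, 3 + √5]

def Gm : Matrix (Fin 2) (Fin 2) ℝ := !![3, 1; -1, 0]

theorem isUnit_Tm : IsUnit Tm := by
  have h5 : √5 ^ 2 = 5 := sq_sqrt (by norm_num)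
  rw [isUnit_iff_isUnit_det, Tm, det_fin_two_of, isUnit_iff_ne_zero]
  nlinarith [sqrt_nonneg 5]

theorem semiconjBy_Rm_Gm : SemiconjBy Rm Gm (Lm * Rm) := by
  unfold SemiconjBy Lm Rm Gm
  ext i j
  fin_cases i <;> fin_cases j <;> simp [mul_apply, Fin.sum_univ_two] <;> norm_num

theorem Gm_mul_Tm : Gm * Tm = (1 / 2 : ℝ) • (Tm * Dm) := by
  have h5 : √5 ^ 2 = 5 := sq_sqrt (by norm_num)
  unfold Gm Tm Dm
  ext i j
  rw [Matrix.smul_apply, Matrix.mul_diagonal]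
  fin_cases i <;> fin_cases j <;> simp [mul_apply, Fin.sum_univ_two] <;> nlinarith

theorem Lm_mul_Rm_mul_Tm : Lm * Rm * Tm = (1 / 10 : ℝ) • (Tm * Am 0) := by
  have h5 : √5 ^ 2 = 5 := sq_sqrt (by norm_num)
  unfold Lm Rm Tm Am
  ext i j
  fin_cases i <;> fin_cases j <;> simp [mul_apply, Fin.sum_univ_two] <;> nlinarith

theorem Am_eq_mul_Dm_pow (m : ℕ) : Am m = Am 0 * Dm ^ m := by
  unfold Am Dm
  rw [diagonal_pow]
  ext i j
  fin_cases i <;> fin_cases j <;> simp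

theorem factor_mul_Tm (m : ℕ) :
    Lm * (Lm * Rm) ^ m * Rm * Tm = (1 / (10 * 2 ^ m) : ℝ) • (Tm * Am m) := by
  calc Lm * (Lm * Rm) ^ m * Rm * Tm = Lm * Rm * (Gm ^ m * Tm) := by
        rw [mul_assoc Lm, ← (semiconjBy_Rm_Gm.pow_right m).eq]
        simp only [mul_assoc]
    _ = (1 / 2 : ℝ) ^ m • (1 / 10 : ℝ) • (Tm * (Am 0 * Dm ^ m)) := by
        rw [pow_mul_eq_smul Gm_mul_Tm, mul_smul_comm, ← mul_assoc, Lm_mul_Rm_mul_Tm,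
          smul_mul_assoc, mul_assoc]
    _ = (1 / (10 * 2 ^ m) : ℝ) • (Tm * Am m) := by
        rw [smul_smul, ← Am_eq_mul_Dm_pow]
        rw [_root_.one_div_pow, one_div_mul_one_div, mul_comm (2 ^ m : ℝ)]

theorem stmt_3 (k : ℕ) (n : Fin k → ℕ) :
    Matrix.trace (List.ofFn (fun l => Lm * (Lm * Rm) ^ (n l) * Rm)).prod =
      (1 / (10 ^ k * 2 ^ (∑ l, n l))) *
        Matrix.trace (List.ofFn (fun l => Am (n l))).prod := by
  refine trace_eq_mul_trace_of_mul_eq_smul isUnit_Tm ?_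
  rw [List.prod_ofFn_mul_eq_smul (fun l => factor_mul_Tm (n l))]
  congr 1
  simp [Finset.prod_mul_distrib, Finset.prod_pow_eq_pow_sum]
end
end

section
/- Let η = [η₁,...,η_l] be a finite sequence over {0,1} written (after a cyclic shift) as (n₁-1) zeros, a one, (n₂-1) zeros, a one, ..., (n_k-1) zeros, a one, with each n_i ≥ 1. Then with L = [[1,1],[0,1]] and R = [[1,0],[1,1]], trace(L(LR)^{η₁}R ⋯ L(LR)^{η_l}R) = trace(L(LR)^{n₁}R ⋯ L(LR)^{n_k}R). -/
/-!
With the Fibonacci matrix `F = !![1,1;1,0]` one has `F * F = L * R` and `L * F = F * R =: Q`.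
Hence `L (LR)^(m+1) R = Q (LR)^m Q`, while the stretch `0^m 1` of `η` contributes
`(LR)^m · L (LR) R = (LR)^m Q Q`. Writing `gᵢ = (LR)^(nᵢ-1) Q`, the two products are `∏ gᵢ Q`
and `∏ Q gᵢ`, which are cyclic shifts of one another and so have the same trace.
-/

open Matrix

def Lz : Matrix (Fin 2) (Fin 2) ℤ := !![1,1;0,1]
def Rz : Matrix (Fin 2) (Fin 2) ℤ := !![1,0;1,1]

/-- The word `L (LR)^m R` as a matrix. -/
def Wz (m : ℕ) : Matrix (Fin 2) (Fin 2) ℤ := Lz * (Lz * Rz) ^ m * Rz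

theorem List.mul_prod_map_mul_comm {M : Type*} [Monoid M] (x : M) (l : List M) :
    x * (l.map (· * x)).prod = (l.map (x * ·)).prod * x := by
  induction l with
  | nil => simp
  | cons a l ih =>
    simp only [List.map_cons, List.prod_cons, ← mul_assoc]
    rw [mul_assoc (x * a), ih, ← mul_assoc]

theorem Matrix.trace_prod_map_mul_comm {n R : Type*} [Fintype n] [DecidableEq n]
    [CommSemiring R] (x : Matrix n n R) (l : List (Matrix n n R)) :
    trace (l.map (· * x)).prod = trace (l.map (x * ·)).prod := by
  cases l with
  | nil => rfl
  | cons a l =>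
    simp only [List.map_cons, List.prod_cons]
    rw [mul_assoc, List.mul_prod_map_mul_comm, ← mul_assoc, trace_mul_comm, ← mul_assoc]

def Fz : Matrix (Fin 2) (Fin 2) ℤ := !![1,1;1,0]
def Qz : Matrix (Fin 2) (Fin 2) ℤ := !![2,1;1,0]

theorem Fz_mul_Fz : Fz * Fz = Lz * Rz := by decide
theorem Lz_mul_Fz : Lz * Fz = Qz := by decide
theorem Fz_mul_Rz : Fz * Rz = Qz := by decide

theorem Wz_succ (m : ℕ) : Wz (m + 1) = Qz * (Lz * Rz) ^ m * Qz := by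
  have hF : Commute Fz ((Lz * Rz) ^ m) := by
    rw [← Fz_mul_Fz]
    exact ((Commute.refl Fz).mul_right (Commute.refl Fz)).pow_right m
  have hpow : (Lz * Rz) ^ (m + 1) = Fz * (Lz * Rz) ^ m * Fz :=
    calc (Lz * Rz) ^ (m + 1) = (Lz * Rz) ^ m * Fz * Fz := by
          rw [pow_succ, ← Fz_mul_Fz, mul_assoc]
      _ = Fz * (Lz * Rz) ^ m * Fz := by rw [hF.eq]
  calc Wz (m + 1) = Lz * Fz * (Lz * Rz) ^ m * (Fz * Rz) := by
        rw [Wz, hpow]; simp only [mul_assoc]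
    _ = Qz * (Lz * Rz) ^ m * Qz := by rw [Lz_mul_Fz, Fz_mul_Rz]

theorem prod_map_Wz_replicate_zero_append_one (m : ℕ) :
    ((List.replicate m 0 ++ [1]).map Wz).prod = (Lz * Rz) ^ m * Qz * Qz := by
  have hW0 : Wz 0 = Lz * Rz := by simp [Wz]
  have hW1 : Wz 1 = Qz * Qz := by simpa using Wz_succ 0
  simp [List.prod_replicate, hW0, hW1, mul_assoc]

theorem stmt_9 (k : ℕ) (n : Fin k → ℕ) (hn : ∀ i, 1 ≤ n i)
    (η : List ℕ)
    (hη : η = (List.ofFn (fun i => List.replicate (n i - 1) 0 ++ [1])).flatten) :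
    Matrix.trace (η.map Wz).prod =
      Matrix.trace (List.ofFn (fun i => Wz (n i))).prod := by
  have hW : ∀ i, Wz (n i) = Qz * ((Lz * Rz) ^ (n i - 1) * Qz) := fun i => by
    rw [← mul_assoc, ← Wz_succ, Nat.sub_add_cancel (hn i)]
  subst hη
  rw [List.map_flatten, List.prod_flatten, List.map_ofFn, List.map_ofFn]
  simp only [Function.comp_def, prod_map_Wz_replicate_zero_append_one, hW]
  simpa only [List.map_ofFn, Function.comp_def]
    using trace_prod_map_mul_comm Qz (List.ofFn fun i => (Lz * Rz) ^ (n i - 1) * Qz)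
end

section
/- Let (n₁,...,n_k) be a sequence of integers with small variation containing values m and m+1. Then the occurrences of the less frequent value are isolated: no two cyclically adjacent entries both equal the less frequent value. -/
/-- A cyclic sequence `n : ZMod k → ℤ` has *small variation* if every two cyclic
blocks of the same size have sums differing by at most `1`. -/
def SmallVariation {k : ℕ} [NeZero k] (n : ZMod k → ℤ) : Prop :=
  ∀ (s : ℕ) (i₀ j₀ : ZMod k),
    |(∑ t ∈ Finset.range (s + 1), n (i₀ + t)) -
      (∑ t ∈ Finset.range (s + 1), n (j₀ + t))| ≤ 1

/-!
If the value `m` occurred at two adjacent places, small variation (for blocks of length two)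
would bound every adjacent pair sum by `2m + 1`. Summing over the `k` cyclic pairs counts every
entry twice, so `2 ∑ n ≤ k (2m + 1)`; since `2 ∑ n = k (2m + 1) + #{n = m + 1} - #{n = m}`, the
value `m` is then at least as frequent as `m + 1`. The case of two adjacent `m + 1` is symmetric.
-/

open Finset

lemma SmallVariation.pair_sum_le {k : ℕ} [NeZero k] {n : ZMod k → ℤ} (h : SmallVariation n)
    (i j : ZMod k) : n i + n (i + 1) ≤ n j + n (j + 1) + 1 := by
  have := (abs_le.mp (h 1 i j)).2
  simp only [sum_range_succ, sum_range_zero, Nat.cast_zero, Nat.cast_one, add_zero,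
    zero_add] at this
  linarith

lemma sum_add_succ_eq_two_mul_sum {k : ℕ} [NeZero k] (n : ZMod k → ℤ) :
    ∑ i, (n i + n (i + 1)) = 2 * ∑ i, n i := by
  rw [sum_add_distrib, Fintype.sum_equiv (Equiv.addRight 1) (fun i => n (i + 1)) n fun _ => rfl]
  ring

lemma two_mul_sum_eq_of_two_valued {ι : Type*} [Fintype ι] {n : ι → ℤ} {m : ℤ}
    (hval : ∀ i, n i = m ∨ n i = m + 1) :
    2 * ∑ i, n i = Fintype.card ι * (2 * m + 1) +
      (#{i | n i = m + 1} - #{i | n i = m} : ℤ) := by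
  have hsum : ∑ i, n i = Fintype.card ι * m + #{i | n i = m + 1} := by
    have hn : ∀ i, n i = m + if n i = m + 1 then 1 else 0 := fun i => by
      rcases hval i with hi | hi <;> simp [hi]
    rw [sum_congr rfl fun i _ => hn i, sum_add_distrib, sum_boole, sum_const, card_univ,
      nsmul_eq_mul]
  have hcard : #{i | n i = m} + #{i | n i = m + 1} = Fintype.card ι := by
    rw [← card_univ, ← card_filter_add_card_filter_not (s := univ) fun i => n i = m]
    congr 2
    exact filter_congr fun i _ => by rcases hval i with hi | hi <;> simp [hi]
  rw [hsum, ← hcard]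
  push_cast
  ring

section

variable {k : ℕ} [NeZero k] {n : ZMod k → ℤ} {m : ℤ}

lemma SmallVariation.card_le_of_adjacent_eq_low (h : SmallVariation n)
    (hval : ∀ i, n i = m ∨ n i = m + 1) {i : ZMod k} (hi : n i = m) (hi1 : n (i + 1) = m) :
    #{j | n j = m + 1} ≤ #{j | n j = m} := by
  have hpairs : ∑ j, (n j + n (j + 1)) ≤ ∑ _j : ZMod k, (2 * m + 1) :=
    sum_le_sum fun j _ => by linarith [h.pair_sum_le j i]
  rw [sum_add_succ_eq_two_mul_sum, two_mul_sum_eq_of_two_valued hval, sum_const, card_univ,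
    nsmul_eq_mul] at hpairs
  have : (#{j | n j = m + 1} : ℤ) ≤ #{j | n j = m} := by linarith
  exact_mod_cast this

lemma SmallVariation.card_le_of_adjacent_eq_high (h : SmallVariation n)
    (hval : ∀ i, n i = m ∨ n i = m + 1) {i : ZMod k} (hi : n i = m + 1)
    (hi1 : n (i + 1) = m + 1) :
    #{j | n j = m} ≤ #{j | n j = m + 1} := by
  have hpairs : ∑ _j : ZMod k, (2 * m + 1) ≤ ∑ j, (n j + n (j + 1)) :=
    sum_le_sum fun j _ => by linarith [h.pair_sum_le i j]
  rw [sum_add_succ_eq_two_mul_sum, two_mul_sum_eq_of_two_valued hval, sum_const, card_univ,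
    nsmul_eq_mul] at hpairs
  have : (#{j | n j = m} : ℤ) ≤ #{j | n j = m + 1} := by linarith
  exact_mod_cast this

end

theorem stmt_13_general {k : ℕ} [NeZero k] (n : ZMod k → ℤ) (m : ℤ)
    (h : SmallVariation n)
    (hval : ∀ i, n i = m ∨ n i = m + 1) :
    ((Finset.univ.filter (fun i : ZMod k => n i = m)).card <
        (Finset.univ.filter (fun i : ZMod k => n i = m + 1)).card →
      ∀ i : ZMod k, n i = m → n (i + 1) ≠ m) ∧
    ((Finset.univ.filter (fun i : ZMod k => n i = m + 1)).card <
        (Finset.univ.filter (fun i : ZMod k => n i = m)).card →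
      ∀ i : ZMod k, n i = m + 1 → n (i + 1) ≠ m + 1) :=
  ⟨fun hlt _ hi hi1 => (h.card_le_of_adjacent_eq_low hval hi hi1).not_gt hlt,
    fun hlt _ hi hi1 => (h.card_le_of_adjacent_eq_high hval hi hi1).not_gt hlt⟩

theorem stmt_13 {k : ℕ} [NeZero k] (n : ZMod k → ℤ) (m : ℤ)
    (h : SmallVariation n)
    (hval : ∀ i, n i = m ∨ n i = m + 1)
    (hm : ∃ i, n i = m) (hm1 : ∃ i, n i = m + 1) :
    ((Finset.univ.filter (fun i : ZMod k => n i = m)).card <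
        (Finset.univ.filter (fun i : ZMod k => n i = m + 1)).card →
      ∀ i : ZMod k, n i = m → n (i + 1) ≠ m) ∧
    ((Finset.univ.filter (fun i : ZMod k => n i = m + 1)).card <
        (Finset.univ.filter (fun i : ZMod k => n i = m)).card →
      ∀ i : ZMod k, n i = m + 1 → n (i + 1) ≠ m + 1) :=
  stmt_13_general n m h hval
end

section
/- A necklace of positive integers [n₁,...,n_k] has small variation if and only if its image under Θ — the necklace consisting of (n₁−1) zeros, a one, (n₂−1) zeros, a one, ..., (n_k−1) zeros, a one — has small variation. -/
/-!
Let `P` be the cyclic prefix sum of `[n₁, …, n_k]`, so that block sums of the necklace are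
increments of `P`. The ones of `Θ` sit at the positions `P m - 1`, hence the number `S x` of ones
among the first `x` letters of the periodic word is the floor inverse of `P`:
`S x = m ↔ P m ≤ x < P (m + 1)`. Small variation of either necklace says that increments of its
prefix sum over intervals of equal length differ by at most one, and this property transfers
between a strictly increasing `P` and its floor inverse: a pair of windows violating it for one
function is read off, through the inverse, as a pair violating it for the other.
-/

/-- A finite list of integers, viewed as a cyclic sequence, has *small variation* if
every two cyclic blocks of the same size have sums differing by at most `1`.
Indices are taken modulo the length. -/
def SmallVariationList (l : List ℤ) : Prop :=
  ∀ (s i₀ j₀ : ℕ),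
    |(∑ t ∈ Finset.range (s + 1), l.getD ((i₀ + t) % l.length) 0) -
      (∑ t ∈ Finset.range (s + 1), l.getD ((j₀ + t) % l.length) 0)| ≤ 1

open Finset

namespace List

section CyclicPrefixSum

variable {M : Type*} [AddCommMonoid M]

def cyclicPrefixSum (l : List M) (x : ℕ) : M :=
  ∑ t ∈ Finset.range x, l.getD (t % l.length) 0

theorem cyclicPrefixSum_zero (l : List M) : l.cyclicPrefixSum 0 = 0 :=
  sum_range_zero _

theorem cyclicPrefixSum_succ (l : List M) (x : ℕ) :
    l.cyclicPrefixSum (x + 1) = l.cyclicPrefixSum x + l.getD (x % l.length) 0 :=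
  sum_range_succ _ _

theorem cyclicPrefixSum_eq_sum_take (l : List M) {m : ℕ} (hm : m ≤ l.length) :
    l.cyclicPrefixSum m = (l.take m).sum := by
  induction m with
  | zero => simp [cyclicPrefixSum_zero]
  | succ m ih =>
    rw [cyclicPrefixSum_succ, ih (by omega), Nat.mod_eq_of_lt hm, getD_eq_getElem _ _ hm,
      sum_take_succ]

theorem cyclicPrefixSum_length (l : List M) : l.cyclicPrefixSum l.length = l.sum := by
  rw [cyclicPrefixSum_eq_sum_take l le_rfl, take_length]

theorem cyclicPrefixSum_add_length (l : List M) (x : ℕ) :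
    l.cyclicPrefixSum (x + l.length) = l.cyclicPrefixSum x + l.sum := by
  induction x with
  | zero => simp [cyclicPrefixSum_zero, cyclicPrefixSum_length]
  | succ x ih =>
    rw [Nat.add_right_comm, cyclicPrefixSum_succ, ih, Nat.add_mod_right, cyclicPrefixSum_succ,
      add_right_comm]

end CyclicPrefixSum

theorem sum_range_getD_add_mod {G : Type*} [AddCommGroup G] (l : List G) (x c : ℕ) :
    ∑ t ∈ Finset.range c, l.getD ((x + t) % l.length) 0 =
      l.cyclicPrefixSum (x + c) - l.cyclicPrefixSum x :=
  (sum_range_add_sub_sum_range (fun t => l.getD (t % l.length) 0) x c).symm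

theorem cyclicPrefixSum_map_natCast (l : List ℕ) (x : ℕ) :
    (l.map (Nat.cast : ℕ → ℤ)).cyclicPrefixSum x = l.cyclicPrefixSum x := by
  simp only [cyclicPrefixSum, ← getD_map, Nat.cast_sum, length_map, Nat.cast_zero]

theorem strictMono_cyclicPrefixSum {l : List ℕ} (hl : ∀ a ∈ l, 1 ≤ a) (hne : l ≠ []) :
    StrictMono l.cyclicPrefixSum := by
  refine strictMono_nat_of_lt_succ fun x => ?_
  have hx : x % l.length < l.length := Nat.mod_lt _ (length_pos_iff.2 hne)
  have := hl _ (getElem_mem hx)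
  rw [cyclicPrefixSum_succ, getD_eq_getElem _ _ hx]
  omega

end List

def HasBalancedIncrements (f : ℕ → ℤ) : Prop :=
  ∀ c x y, f (x + c) - f x ≤ f (y + c) - f y + 1

theorem smallVariationList_iff (l : List ℤ) :
    SmallVariationList l ↔ HasBalancedIncrements l.cyclicPrefixSum := by
  simp only [SmallVariationList, HasBalancedIncrements, List.sum_range_getD_add_mod]
  constructor
  · rintro h (_ | s) x y
    · simp
    · linarith [(abs_le.1 (h s x y)).2]
  · exact fun h s x y => abs_le.2 ⟨by linarith [h (s + 1) y x], by linarith [h (s + 1) x y]⟩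

namespace StrictMono

variable {P : ℕ → ℕ}

theorem exists_apply_le_lt_apply_succ (hP : StrictMono P) {x : ℕ} (hx : P 0 ≤ x) :
    ∃ m, P m ≤ x ∧ x < P (m + 1) := by
  have hex : ∃ m, x < P m := ⟨x + 1, Nat.lt_of_lt_of_le (Nat.lt_add_one x) (hP.id_le _)⟩
  obtain ⟨m, hm⟩ : ∃ m, Nat.find hex = m + 1 :=
    Nat.exists_eq_succ_of_ne_zero fun h => by have := Nat.find_spec hex; rw [h] at this; omega
  exact ⟨m, not_lt.1 (Nat.find_min hex (by omega)), hm ▸ Nat.find_spec hex⟩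

theorem sum_range_eq_of_apply_le_lt_apply_succ (hP : StrictMono P) (hP0 : P 0 = 0) {w : ℕ → ℤ}
    (hw : ∀ m x, P m ≤ x → x < P (m + 1) → w x = if x + 1 = P (m + 1) then 1 else 0)
    {m x : ℕ} (h₁ : P m ≤ x) (h₂ : x < P (m + 1)) : ∑ t ∈ Finset.range x, w t = m := by
  induction x generalizing m with
  | zero =>
    obtain rfl : m = 0 := by
      by_contra hm
      have := hP (Nat.pos_of_ne_zero hm)
      omega
    simp
  | succ x ih =>
    rw [sum_range_succ]
    by_cases hx : x + 1 = P m
    · obtain ⟨m, rfl⟩ : ∃ m', m = m' + 1 :=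
        Nat.exists_eq_succ_of_ne_zero (by rintro rfl; omega)
      have := hP (Nat.lt_add_one m)
      rw [ih (m := m) (by omega) (by omega), hw m x (by omega) (by omega), if_pos hx,
        Nat.cast_succ]
    · rw [ih (m := m) (by omega) (by omega), hw m x (by omega) (by omega), if_neg (by omega),
        add_zero]

theorem hasBalancedIncrements_of_natCast (hP : StrictMono P) (hP0 : P 0 = 0) {S : ℕ → ℤ}
    (hS : ∀ m x, P m ≤ x → x < P (m + 1) → S x = m)
    (H : HasBalancedIncrements fun m => (P m : ℤ)) : HasBalancedIncrements S := by
  intro L p q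
  obtain ⟨i, hi⟩ := hP.exists_apply_le_lt_apply_succ (x := p) (by omega)
  obtain ⟨i', hi'⟩ := hP.exists_apply_le_lt_apply_succ (x := p + L) (by omega)
  obtain ⟨j, hj⟩ := hP.exists_apply_le_lt_apply_succ (x := q) (by omega)
  obtain ⟨j', hj'⟩ := hP.exists_apply_le_lt_apply_succ (x := q + L) (by omega)
  rw [hS _ _ hi.1 hi.2, hS _ _ hi'.1 hi'.2, hS _ _ hj.1 hj.2, hS _ _ hj'.1 hj'.2]
  have hjj' : j ≤ j' := Nat.lt_add_one_iff.1 (hP.lt_iff_lt.1 (show P j < P (j' + 1) by omega))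
  by_contra! h
  -- The `a + 1` increments of `P` after `j` exceed `L`, the `a + 1` increments after `i + 1` stay
  -- below `L`, where `a = j' - j`.
  have hii' := hP.monotone (show i + (j' - j) + 2 ≤ i' by omega)
  have := H (j' - j + 1) j (i + 1)
  dsimp only at this
  rw [show j + (j' - j + 1) = j' + 1 by omega,
    show i + 1 + (j' - j + 1) = i + (j' - j) + 2 by omega] at this
  omega

theorem natCast_hasBalancedIncrements (hP : StrictMono P) {K : ℕ} (hK : 0 < K)
    (hPK : ∀ m, P (m + K) = P m + P K) {S : ℕ → ℤ}
    (hS : ∀ m x, P m ≤ x → x < P (m + 1) → S x = m)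
    (H : HasBalancedIncrements S) : HasBalancedIncrements fun m => (P m : ℤ) := by
  intro c i j
  dsimp only
  -- Increments of `P` are invariant under shifting by the period, so we may start at `j ≥ 1`.
  wlog hj : 1 ≤ j generalizing j
  · have := this (j + K) (by omega)
    rw [Nat.add_right_comm, hPK, hPK] at this
    push_cast at this
    linarith
  obtain ⟨j, rfl⟩ : ∃ j', j = j' + 1 := ⟨j - 1, by omega⟩
  by_contra! h
  -- Starting at the one in position `P (j + 1) - 1`, a window of length `L` of the word counted
  -- by `S` contains `c + 1` ones; starting at `P i` it contains at most `c - 1`.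
  set L := P (j + 1 + c) - P (j + 1) + 1
  have hjc := hP.monotone (show j + 1 ≤ j + 1 + c by omega)
  have hj := hP (Nat.lt_add_one j)
  have hjc' := hP (Nat.lt_add_one (j + 1 + c))
  have h₁ : S (P (j + 1) - 1) = j := hS _ _ (by omega) (by omega)
  have h₂ : S (P (j + 1) - 1 + L) = (j + 1 + c : ℕ) := hS _ _ (by omega) (by omega)
  have h₃ : S (P i) = i := hS _ _ le_rfl (hP (Nat.lt_add_one i))
  obtain ⟨m, hm⟩ := hP.exists_apply_le_lt_apply_succ (x := P i + L)
    ((hP.monotone (Nat.zero_le i)).trans (Nat.le_add_right _ _))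
  have hmi : m < i + c := hP.lt_iff_lt.1 (by omega)
  have := H L (P (j + 1) - 1) (P i)
  rw [h₁, h₂, h₃, hS _ _ hm.1 hm.2] at this
  omega

end StrictMono

def theta (l : List ℕ) : List ℤ :=
  (l.map fun a => List.replicate (a - 1) 0 ++ [1]).flatten

namespace List

theorem getD_replicate_zero_append_one {a : ℕ} (ha : 1 ≤ a) (r : ℕ) :
    (replicate (a - 1) (0 : ℤ) ++ [1]).getD r 0 = if r + 1 = a then 1 else 0 := by
  rcases lt_trichotomy r (a - 1) with hr | rfl | hr
  · rw [getD_append _ _ _ _ (by simpa using hr), getD_replicate (x := (0 : ℤ)) hr,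
      if_neg (by omega)]
  · rw [getD_append_right _ _ _ _ (by simp), if_pos (Nat.sub_add_cancel ha)]
    simp
  · rw [getD_append_right _ _ _ _ (by simp; omega), getD_eq_default _ _ (by simp; omega),
      if_neg (by omega)]

theorem length_theta {l : List ℕ} (hl : ∀ a ∈ l, 1 ≤ a) : (theta l).length = l.sum := by
  rw [theta, length_flatten, map_map]
  congr 1
  conv_rhs => rw [← map_id l]
  exact map_congr_left fun a ha => by simp; have := hl a ha; omega

theorem getD_theta {l : List ℕ} (hl : ∀ a ∈ l, 1 ≤ a) {m : ℕ} (hm : m < l.length) {x : ℕ}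
    (h₁ : (l.take m).sum ≤ x) (h₂ : x < (l.take (m + 1)).sum) :
    (theta l).getD x 0 = if x + 1 = (l.take (m + 1)).sum then 1 else 0 := by
  have hsplit : theta l = theta (l.take m) ++
      ((replicate (l[m] - 1) 0 ++ [1]) ++ theta (l.drop (m + 1))) := by
    conv_lhs => rw [← take_append_drop m l, drop_eq_getElem_cons hm]
    simp only [theta, map_append, map_cons, flatten_append, flatten_cons]
  have hlen : (theta (l.take m)).length = (l.take m).sum :=
    length_theta fun a ha => hl a (mem_of_mem_take ha)
  have hlm := hl _ (getElem_mem hm)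
  rw [sum_take_succ _ _ hm] at h₂ ⊢
  rw [hsplit, getD_append_right _ _ _ _ (by omega), getD_append _ _ _ _ (by simp; omega),
    getD_replicate_zero_append_one hlm, hlen]
  split_ifs <;> omega

theorem getD_theta_mod {l : List ℕ} (hl : ∀ a ∈ l, 1 ≤ a) (hne : l ≠ []) {m x : ℕ}
    (h₁ : l.cyclicPrefixSum m ≤ x) (h₂ : x < l.cyclicPrefixSum (m + 1)) :
    (theta l).getD (x % (theta l).length) 0 =
      if x + 1 = l.cyclicPrefixSum (m + 1) then 1 else 0 := by
  rw [length_theta hl]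
  induction m using Nat.strong_induction_on generalizing x with
  | _ m ih =>
  rcases lt_or_ge m l.length with hm | hm
  · rw [cyclicPrefixSum_eq_sum_take _ hm.le] at h₁
    rw [cyclicPrefixSum_eq_sum_take _ hm] at h₂ ⊢
    have hx : x < l.sum := h₂.trans_le ((take_sublist _ _).sum_le_sum fun _ _ => Nat.zero_le _)
    rw [Nat.mod_eq_of_lt hx]
    exact getD_theta hl hm h₁ h₂
  · obtain ⟨m, rfl⟩ : ∃ m', m = m' + l.length := ⟨m - l.length, by omega⟩
    rw [Nat.add_right_comm, cyclicPrefixSum_add_length] at h₂ ⊢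
    rw [cyclicPrefixSum_add_length] at h₁
    obtain ⟨x, rfl⟩ : ∃ x', x = x' + l.sum := ⟨x - l.sum, by omega⟩
    have := length_pos_iff.2 hne
    rw [Nat.add_mod_right, ih m (by omega) (by omega) (by omega)]
    split_ifs <;> omega

theorem cyclicPrefixSum_theta {l : List ℕ} (hl : ∀ a ∈ l, 1 ≤ a) (hne : l ≠ []) {m x : ℕ}
    (h₁ : l.cyclicPrefixSum m ≤ x) (h₂ : x < l.cyclicPrefixSum (m + 1)) :
    (theta l).cyclicPrefixSum x = m :=
  (strictMono_cyclicPrefixSum hl hne).sum_range_eq_of_apply_le_lt_apply_succ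
    (cyclicPrefixSum_zero l) (fun _ _ => getD_theta_mod hl hne) h₁ h₂

end List

theorem smallVariationList_map_natCast_iff_theta {l : List ℕ} (hl : ∀ a ∈ l, 1 ≤ a) :
    SmallVariationList (l.map Nat.cast) ↔ SmallVariationList (theta l) := by
  rcases eq_or_ne l [] with rfl | hne
  · exact Iff.rfl
  have hP := List.strictMono_cyclicPrefixSum hl hne
  have hS : ∀ m x, l.cyclicPrefixSum m ≤ x → x < l.cyclicPrefixSum (m + 1) →
      (theta l).cyclicPrefixSum x = m := fun _ _ => List.cyclicPrefixSum_theta hl hne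
  have hper (m : ℕ) : l.cyclicPrefixSum (m + l.length) =
      l.cyclicPrefixSum m + l.cyclicPrefixSum l.length := by
    rw [List.cyclicPrefixSum_add_length, List.cyclicPrefixSum_length]
  rw [smallVariationList_iff, smallVariationList_iff,
    funext (List.cyclicPrefixSum_map_natCast l)]
  exact ⟨hP.hasBalancedIncrements_of_natCast (List.cyclicPrefixSum_zero l) hS,
    hP.natCast_hasBalancedIncrements (List.length_pos_iff.2 hne) hper hS⟩

theorem stmt_14_general (k : ℕ) (n : Fin k → ℕ) (hn : ∀ i, 1 ≤ n i) :
    SmallVariationList (List.ofFn (fun i => (n i : ℤ))) ↔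
      SmallVariationList
        ((List.ofFn (fun i => List.replicate (n i - 1) (0 : ℤ) ++ [1])).flatten) := by
  have h := smallVariationList_map_natCast_iff_theta (l := List.ofFn n) fun a ha => by
    obtain ⟨i, rfl⟩ := List.mem_ofFn.1 ha
    exact hn i
  rwa [theta, List.map_ofFn, List.map_ofFn] at h

theorem stmt_14 (k : ℕ) (hk : 0 < k) (n : Fin k → ℕ) (hn : ∀ i, 1 ≤ n i) :
    SmallVariationList (List.ofFn (fun i => (n i : ℤ))) ↔
      SmallVariationList
        ((List.ofFn (fun i => List.replicate (n i - 1) (0 : ℤ) ++ [1])).flatten) :=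
  stmt_14_general k n hn
end

section
/- For each triple (x, y, m) of positive integers with gcd(x,y) = 1, there exists a unique (up to cyclic shift) primitive small-variation sequence over {m, m+1} in which m occurs exactly x times and m+1 occurs exactly y times. -/
/-- A list is *primitive* (as a necklace) if no cyclic shift of it is a
concatenation of at least two copies of a shorter list. -/
def PrimitiveList (l : List ℤ) : Prop :=
  ∀ (w : List ℤ) (t r : ℕ), 2 ≤ t → l.rotate r ≠ (List.replicate t w).flatten

/-!
Write `n = x + y`. The mechanical word `i ↦ m + ⌊(i + 1) y / n⌋ - ⌊i y / n⌋` has window sums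
`L m + ⌊(i + L) y / n⌋ - ⌊i y / n⌋`, and since `⌊a⌋ + ⌊b⌋ ≤ ⌊a + b⌋ ≤ ⌊a⌋ + ⌊b⌋ + 1` two windows
of the same length differ by at most one. Any sequence with coprime letter counts is primitive.

For uniqueness, let `f` be balanced and `n`-periodic with period sum `T`, and consider the
potential `P i = n S i - i T`, where `S` is the prefix sum. Since `n` times a window sum minus
`L T` is a sum of `n - 1` differences of window sums, `|P a - P b| ≤ n - 1`, so `P` takes values
in an interval `[c, c + n)`; as `P i ≡ -i T (mod n)`, `P` is determined by `c`. When `T` is coprime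
to `n`, a shift of a second such sequence makes its potential live in the same interval, so the
potentials agree, and `n f i = P (i + 1) - P i + T` recovers the sequence.
-/

open Finset Function

def windowSum (f : ℕ → ℤ) (i L : ℕ) : ℤ := ∑ t ∈ range L, f (i + t)

def IsBalanced (f : ℕ → ℤ) : Prop := ∀ i j L, |windowSum f i L - windowSum f j L| ≤ 1

def potential (f : ℕ → ℤ) (n i : ℕ) : ℤ := n * windowSum f 0 i - i * windowSum f 0 n

section Potential

variable {f : ℕ → ℤ} {n : ℕ}

lemma windowSum_eq_sub (f : ℕ → ℤ) (i L : ℕ) :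
    windowSum f i L = windowSum f 0 (i + L) - windowSum f 0 i := by
  simp only [windowSum, zero_add, sum_range_add]
  ring

lemma windowSum_zero_succ (f : ℕ → ℤ) (i : ℕ) :
    windowSum f 0 (i + 1) = windowSum f 0 i + f i := by
  simp [windowSum, sum_range_succ]

lemma Function.Periodic.windowSum_zero_add (hf : Periodic f n) (i : ℕ) :
    windowSum f 0 (i + n) = windowSum f 0 i + windowSum f 0 n := by
  induction i with
  | zero => simp [windowSum]
  | succ i ih =>
    rw [Nat.add_right_comm, windowSum_zero_succ, ih, hf, windowSum_zero_succ]
    ring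

lemma Function.Periodic.windowSum_period (hf : Periodic f n) (i : ℕ) :
    windowSum f i n = windowSum f 0 n := by
  rw [windowSum_eq_sub, hf.windowSum_zero_add]
  ring

lemma Function.Periodic.sum_windowSum (hf : Periodic f n) (i L : ℕ) :
    ∑ j ∈ range n, windowSum f (i + j) L = L * windowSum f 0 n := by
  calc ∑ j ∈ range n, windowSum f (i + j) L = ∑ t ∈ range L, windowSum f (i + t) n := by
        simp only [windowSum]
        rw [sum_comm]
        simp only [add_right_comm i]
    _ = L * windowSum f 0 n := by simp [hf.windowSum_period]

lemma IsBalanced.abs_mul_windowSum_sub_le (hb : IsBalanced f) (hf : Periodic f n) (hn : 0 < n)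
    (i L : ℕ) : |n * windowSum f i L - L * windowSum f 0 n| ≤ n - 1 := by
  obtain ⟨k, rfl⟩ : ∃ k, n = k + 1 := ⟨n - 1, by omega⟩
  have hsum : ((k + 1 : ℕ) : ℤ) * windowSum f i L - L * windowSum f 0 (k + 1)
      = ∑ j ∈ range (k + 1), (windowSum f i L - windowSum f (i + j) L) := by
    rw [sum_sub_distrib, hf.sum_windowSum, sum_const, card_range, nsmul_eq_mul]
  rw [hsum, sum_range_succ', add_zero, sub_self, add_zero]
  calc |∑ j ∈ range k, (windowSum f i L - windowSum f (i + (j + 1)) L)|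
      ≤ ∑ j ∈ range k, |windowSum f i L - windowSum f (i + (j + 1)) L| := abs_sum_le_sum_abs _ _
    _ ≤ ∑ _j ∈ range k, (1 : ℤ) := sum_le_sum fun j _ => hb _ _ _
    _ = ((k + 1 : ℕ) : ℤ) - 1 := by simp

lemma potential_add_sub (f : ℕ → ℤ) (n i L : ℕ) :
    potential f n (i + L) - potential f n i = n * windowSum f i L - L * windowSum f 0 n := by
  rw [windowSum_eq_sub]
  simp only [potential]
  push_cast
  ring

lemma IsBalanced.abs_potential_sub_le (hb : IsBalanced f) (hf : Periodic f n) (hn : 0 < n)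
    (a b : ℕ) : |potential f n a - potential f n b| ≤ n - 1 := by
  wlog hab : b ≤ a generalizing a b
  · rw [abs_sub_comm]
    exact this b a (by omega)
  obtain ⟨L, rfl⟩ := Nat.exists_eq_add_of_le hab
  rw [potential_add_sub]
  exact hb.abs_mul_windowSum_sub_le hf hn b L

lemma periodic_potential (hf : Periodic f n) : Periodic (potential f n) n := by
  intro i
  simp only [potential, hf.windowSum_zero_add]
  push_cast
  ring

lemma dvd_potential_add (f : ℕ → ℤ) (n i : ℕ) :
    (n : ℤ) ∣ potential f n i + i * windowSum f 0 n :=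
  ⟨windowSum f 0 i, by simp [potential]⟩

lemma mul_eq_potential_succ_sub (f : ℕ → ℤ) (n i : ℕ) :
    n * f i = potential f n (i + 1) - potential f n i + windowSum f 0 n := by
  simp only [potential, windowSum_zero_succ]
  push_cast
  ring

lemma IsBalanced.exists_potential_mem_Ico (hb : IsBalanced f) (hf : Periodic f n) (hn : 0 < n) :
    ∃ c : ℤ, ∀ i, potential f n i ∈ Set.Ico c (c + n) := by
  obtain ⟨i₀, -, hmin⟩ := (range n).exists_min_image (potential f n) ⟨0, mem_range.2 hn⟩
  refine ⟨potential f n i₀, fun i => ⟨?_, ?_⟩⟩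
  · rw [← (periodic_potential hf).map_mod_nat i]
    exact hmin _ (mem_range.2 (Nat.mod_lt _ hn))
  · linarith [(abs_le.1 (hb.abs_potential_sub_le hf hn i i₀)).2]

end Potential

lemma eq_of_dvd_sub_of_mem_Ico {n a b c : ℤ} (h : n ∣ a - b) (ha : a ∈ Set.Ico c (c + n))
    (hb : b ∈ Set.Ico c (c + n)) : a = b :=
  sub_eq_zero.1 <| Int.eq_zero_of_abs_lt_dvd h <|
    abs_sub_lt_iff.2 ⟨by linarith [ha.2, hb.1], by linarith [ha.1, hb.2]⟩

lemma IsCoprime.exists_nat_dvd_mul_add {T n : ℤ} (h : IsCoprime T n) (hn : n ≠ 0) (v : ℤ) :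
    ∃ r : ℕ, n ∣ r * T + v := by
  obtain ⟨u, w, huw⟩ := h
  refine ⟨((-v * u) % n).toNat, v * w - (-v * u) / n * T, ?_⟩
  rw [Int.toNat_of_nonneg (Int.emod_nonneg _ hn), Int.emod_def]
  linear_combination (-v) * huw

theorem IsBalanced.exists_shift_eq {f g : ℕ → ℤ} {n : ℕ} (hn : 0 < n) (hf : Periodic f n)
    (hg : Periodic g n) (hfb : IsBalanced f) (hgb : IsBalanced g)
    (hsum : windowSum f 0 n = windowSum g 0 n) (hcop : IsCoprime (windowSum f 0 n) n) :
    ∃ r, ∀ i, f i = g (i + r) := by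
  obtain ⟨cf, hcf⟩ := hfb.exists_potential_mem_Ico hf hn
  obtain ⟨cg, hcg⟩ := hgb.exists_potential_mem_Ico hg hn
  have hcf0 : cf ≤ 0 ∧ 0 < cf + n := by simpa [potential, windowSum] using hcf 0
  -- `r` is chosen so that `i ↦ potential g n (i + r) - potential g n r` lands in `[cf, cf + n)`.
  obtain ⟨r, hr⟩ := hcop.exists_nat_dvd_mul_add (by exact_mod_cast hn.ne') (cg - cf)
  have hgr : potential g n r = cg - cf := by
    refine eq_of_dvd_sub_of_mem_Ico ?_ (hcg r) ⟨by linarith, by linarith⟩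
    rw [show potential g n r - (cg - cf) = potential g n r + r * windowSum g 0 n
      - (r * windowSum f 0 n + (cg - cf)) by rw [hsum]; ring]
    exact dvd_sub (dvd_potential_add g n r) hr
  have hshift : ∀ i, potential g n (i + r) - potential g n r = potential f n i := by
    intro i
    refine eq_of_dvd_sub_of_mem_Ico ?_ ⟨?_, ?_⟩ (hcf i)
    · rw [show potential g n (i + r) - potential g n r - potential f n i
          = potential g n (i + r) + (i + r : ℕ) * windowSum g 0 n
            - (potential g n r + r * windowSum g 0 n) - (potential f n i + i * windowSum f 0 n)
          by rw [hsum]; push_cast; ring]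
      exact dvd_sub (dvd_sub (dvd_potential_add g n (i + r)) (dvd_potential_add g n r))
        (dvd_potential_add f n i)
    · linarith [(hcg (i + r)).1]
    · linarith [(hcg (i + r)).2]
  refine ⟨r, fun i => mul_left_cancel₀ (Nat.cast_ne_zero.2 hn.ne') ?_⟩
  rw [mul_eq_potential_succ_sub, mul_eq_potential_succ_sub, ← hshift, ← hshift, hsum,
    Nat.add_right_comm]
  ring

def mechanical (n y i : ℕ) : ℤ := ((i + 1) * y / n : ℕ) - (i * y / n : ℕ)

section Mechanical

variable {n y : ℕ}

lemma windowSum_mechanical (n y i L : ℕ) :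
    windowSum (mechanical n y) i L = ((i + L) * y / n : ℕ) - (i * y / n : ℕ) := by
  simpa only [windowSum, mechanical, add_assoc, add_zero] using
    sum_range_sub (fun t => (((i + t) * y / n : ℕ) : ℤ)) L

lemma isBalanced_mechanical (n y : ℕ) : IsBalanced (mechanical n y) := by
  have bounds : ∀ a L : ℕ, ((a * y / n : ℕ) : ℤ) + (L * y / n : ℕ) ≤ ((a + L) * y / n : ℕ)
      ∧ (((a + L) * y / n : ℕ) : ℤ) ≤ (a * y / n : ℕ) + (L * y / n : ℕ) + 1 := fun a L => by
    rw [add_mul]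
    exact ⟨mod_cast Nat.div_add_div_le_add_div,
      mod_cast Nat.add_div_le_div_add_div_add_one _ _ _⟩
  intro i j L
  rw [windowSum_mechanical, windowSum_mechanical, abs_le]
  have hi := bounds i L
  have hj := bounds j L
  constructor <;> linarith [hi.1, hi.2, hj.1, hj.2]

lemma periodic_mechanical (hn : 0 < n) : Periodic (mechanical n y) n := by
  intro i
  simp only [mechanical, Nat.add_right_comm i n 1, add_mul, Nat.add_mul_div_left _ _ hn]
  push_cast
  ring

lemma mechanical_eq_zero_or_one (hn : 0 < n) (hy : y ≤ n) (i : ℕ) :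
    mechanical n y i = 0 ∨ mechanical n y i = 1 := by
  have hlo : i * y / n ≤ (i * y + y) / n := Nat.div_le_div_right (by omega)
  have hhi : (i * y + y) / n ≤ i * y / n + 1 :=
    (Nat.div_le_div_right (by omega)).trans (Nat.add_div_right _ hn).le
  simp only [mechanical, add_mul, one_mul]
  omega

end Mechanical

lemma windowSum_const_add (f : ℕ → ℤ) (m : ℤ) (i L : ℕ) :
    windowSum (fun i => m + f i) i L = L * m + windowSum f i L := by
  simp [windowSum, sum_add_distrib]

lemma IsBalanced.const_add {f : ℕ → ℤ} (hb : IsBalanced f) (m : ℤ) :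
    IsBalanced fun i => m + f i := by
  intro i j L
  simpa only [windowSum_const_add, add_sub_add_left_eq_sub] using hb i j L

def cyclicSeq (l : List ℤ) (i : ℕ) : ℤ := l.getD (i % l.length) 0

lemma smallVariationList_iff_isBalanced (l : List ℤ) :
    SmallVariationList l ↔ IsBalanced (cyclicSeq l) := by
  refine ⟨fun h i j L => ?_, fun h s i j => h i j (s + 1)⟩
  cases L with
  | zero => simp [windowSum]
  | succ s => exact h s i j

lemma periodic_cyclicSeq (l : List ℤ) : Periodic (cyclicSeq l) l.length := fun i => by
  simp [cyclicSeq]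

lemma windowSum_cyclicSeq_length (l : List ℤ) : windowSum (cyclicSeq l) 0 l.length = l.sum := by
  conv_rhs => rw [← List.ofFn_getElem (xs := l)]
  rw [windowSum, sum_range, List.sum_ofFn]
  refine sum_congr rfl fun i _ => ?_
  simp [cyclicSeq, Nat.mod_eq_of_lt i.2]

lemma eq_rotate_of_cyclicSeq_eq {l l' : List ℤ} {r : ℕ} (hlen : l'.length = l.length)
    (h : ∀ i, cyclicSeq l' i = cyclicSeq l (i + r)) : l' = l.rotate r := by
  refine List.ext_getElem (by simp [hlen]) fun i h₁ h₂ => ?_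
  have := h i
  simp only [cyclicSeq, Nat.mod_eq_of_lt h₁, List.getD_eq_getElem _ _ h₁] at this
  rw [this, List.getElem_rotate, List.getD_eq_getElem]

lemma primitiveList_of_coprime_count {l : List ℤ} {a b : ℤ}
    (h : Nat.Coprime (l.count a) (l.count b)) : PrimitiveList l := by
  intro w t r ht heq
  have hcount : ∀ c, l.count c = t * w.count c := fun c => by
    rw [← (l.rotate_perm r).count_eq, heq, List.count_flatten, List.map_replicate,
      List.sum_replicate, smul_eq_mul]
  have : t ∣ 1 := h ▸ Nat.dvd_gcd (hcount a ▸ dvd_mul_right _ _) (hcount b ▸ dvd_mul_right _ _)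
  have := Nat.le_of_dvd one_pos this
  omega

section TwoLetters

variable {l : List ℤ} {m : ℤ}

lemma length_eq_count_add_count (h : ∀ a ∈ l, a = m ∨ a = m + 1) :
    l.length = l.count m + l.count (m + 1) := by
  induction l with
  | nil => simp
  | cons a t ih =>
    have ht := ih fun b hb => h b (List.mem_cons_of_mem a hb)
    rcases h a List.mem_cons_self with rfl | rfl <;> simp [ht] <;> omega

lemma sum_eq_length_mul_add_count (h : ∀ a ∈ l, a = m ∨ a = m + 1) :
    l.sum = l.length * m + l.count (m + 1) := by
  induction l with
  | nil => simp
  | cons a t ih =>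
    have ht := ih fun b hb => h b (List.mem_cons_of_mem a hb)
    rcases h a List.mem_cons_self with rfl | rfl <;> simp [ht] <;> ring

lemma count_eq_and_count_eq_iff (h : ∀ a ∈ l, a = m ∨ a = m + 1) (x y : ℕ) :
    l.count m = x ∧ l.count (m + 1) = y ↔ l.length = x + y ∧ l.sum = y + (x + y : ℕ) * m := by
  rw [sum_eq_length_mul_add_count h, length_eq_count_add_count h]
  constructor
  · rintro ⟨rfl, rfl⟩
    exact ⟨rfl, by ring⟩
  · rintro ⟨hlen, hsum⟩
    rw [hlen] at hsum
    omega

end TwoLetters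

def mechanicalList (m : ℤ) (n y : ℕ) : List ℤ := (List.range n).map fun i => m + mechanical n y i

section MechanicalList

variable {m : ℤ} {n y : ℕ}

lemma length_mechanicalList (m : ℤ) (n y : ℕ) : (mechanicalList m n y).length = n := by
  simp [mechanicalList]

lemma cyclicSeq_mechanicalList (hn : 0 < n) :
    cyclicSeq (mechanicalList m n y) = fun i => m + mechanical n y i := by
  funext i
  rw [cyclicSeq, length_mechanicalList, ← (periodic_mechanical hn).map_mod_nat i]
  simp [mechanicalList, Nat.mod_lt _ hn]

lemma mem_mechanicalList (hn : 0 < n) (hy : y ≤ n) :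
    ∀ a ∈ mechanicalList m n y, a = m ∨ a = m + 1 := by
  simp only [mechanicalList, List.mem_map]
  rintro _ ⟨i, -, rfl⟩
  rcases mechanical_eq_zero_or_one hn hy i with h | h <;> simp [h]

lemma sum_mechanicalList (hn : 0 < n) : (mechanicalList m n y).sum = y + n * m := by
  rw [← windowSum_cyclicSeq_length, cyclicSeq_mechanicalList hn, length_mechanicalList,
    windowSum_const_add, windowSum_mechanical, zero_add, zero_mul, Nat.zero_div,
    Nat.mul_div_cancel_left _ hn]
  push_cast
  ring

end MechanicalList

theorem stmt_15_general (x y : ℕ) (m : ℤ) (hxy : Nat.gcd x y = 1) :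
    ∃ l : List ℤ,
      ((∀ a ∈ l, a = m ∨ a = m + 1) ∧ l.count m = x ∧ l.count (m + 1) = y ∧
        SmallVariationList l ∧ PrimitiveList l) ∧
      ∀ l' : List ℤ,
        ((∀ a ∈ l', a = m ∨ a = m + 1) ∧ l'.count m = x ∧ l'.count (m + 1) = y ∧
          SmallVariationList l' ∧ PrimitiveList l') →
        ∃ r : ℕ, l' = l.rotate r := by
  have hn : 0 < x + y := Nat.pos_of_ne_zero fun h => by simp_all
  set l := mechanicalList m (x + y) y
  have hmem := mem_mechanicalList (m := m) hn (Nat.le_add_left y x)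
  have hlen : l.length = x + y := length_mechanicalList m (x + y) y
  have hbal : IsBalanced (cyclicSeq l) := by
    rw [cyclicSeq_mechanicalList hn]
    exact (isBalanced_mechanical _ _).const_add m
  obtain ⟨hcm, hc1⟩ := (count_eq_and_count_eq_iff hmem x y).2 ⟨hlen, sum_mechanicalList hn⟩
  refine ⟨l, ⟨hmem, hcm, hc1, (smallVariationList_iff_isBalanced l).2 hbal,
    primitiveList_of_coprime_count (a := m) (b := m + 1) (by rwa [hcm, hc1])⟩, ?_⟩
  rintro l' ⟨hmem', hcm', hc1', hsv', -⟩
  obtain ⟨hlen', hsum'⟩ := (count_eq_and_count_eq_iff hmem' x y).1 ⟨hcm', hc1'⟩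
  have hcop : IsCoprime (y + (x + y : ℕ) * m : ℤ) (x + y : ℕ) :=
    IsCoprime.add_mul_left_left
      (Nat.isCoprime_iff_coprime.2 (Nat.coprime_add_self_right.2 (Nat.coprime_comm.1 hxy))) m
  have hsum : ∀ k : List ℤ, k.length = x + y → windowSum (cyclicSeq k) 0 (x + y) = k.sum :=
    fun k hk => hk ▸ windowSum_cyclicSeq_length k
  obtain ⟨r, hr⟩ := IsBalanced.exists_shift_eq hn (hlen' ▸ periodic_cyclicSeq l')
    (hlen ▸ periodic_cyclicSeq l) ((smallVariationList_iff_isBalanced l').1 hsv') hbal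
    (by rw [hsum l' hlen', hsum l hlen, hsum', sum_mechanicalList hn])
    (by rwa [hsum l' hlen', hsum'])
  exact ⟨r, eq_rotate_of_cyclicSeq_eq (hlen'.trans hlen.symm) hr⟩

theorem stmt_15 (x y : ℕ) (m : ℤ) (hx : 0 < x) (hy : 0 < y) (hm : 0 < m)
    (hxy : Nat.gcd x y = 1) :
    ∃ l : List ℤ,
      ((∀ a ∈ l, a = m ∨ a = m + 1) ∧ l.count m = x ∧ l.count (m + 1) = y ∧
        SmallVariationList l ∧ PrimitiveList l) ∧
      ∀ l' : List ℤ,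
        ((∀ a ∈ l', a = m ∨ a = m + 1) ∧ l'.count m = x ∧ l'.count (m + 1) = y ∧
          SmallVariationList l' ∧ PrimitiveList l') →
        ∃ r : ℕ, l' = l.rotate r :=
  stmt_15_general x y m hxy
end

section
/- Let ξ = 3+√5, ξ̄ = 3−√5, and for S ⊆ {1,...,k} let r(S) be as defined (sum over runs of S and Sᶜ of run-length minus one; r(∅) = r(full set) = k). Then for all n₁,...,n_k ≥ 0, trace(L(LR)^{n₁}R ⋯ L(LR)^{n_k}R) = (1/(10^k·2^{n₁+⋯+n_k})) · Σ_{S⊆{1,...,k}} 3^{r(S)}·2^{k−r(S)}·(ξ+2)^{|S|}·(ξ̄+2)^{|Sᶜ|}·ξ^{Σ_{i∈S}n_i}·ξ̄^{Σ_{i∈Sᶜ}n_i}, where L = [[1,1],[0,1]] and R = [[1,0],[1,1]]. -/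
open Matrix Real

noncomputable section

variable {k : ℕ} [NeZero k]

/-- Starting points of runs (maximal cyclically-consecutive blocks) of `S ⊆ Fin k`. -/
def runStarts (S : Finset (Fin k)) : Finset (Fin k) :=
  S.filter (fun i => i - 1 ∉ S)

/-- The run statistic `r(S)`: the sum over all runs `s` of `S` and of `Sᶜ` of
`|s| - 1` (equal to `|S| - #runs(S) + |Sᶜ| - #runs(Sᶜ)` since runs partition),
with the convention `r(∅) = r(univ) = k`. -/
def rStat (S : Finset (Fin k)) : ℕ :=
  if S = ∅ ∨ S = Finset.univ then k
  else (S.card - (runStarts S).card) + (Sᶜ.card - (runStarts Sᶜ).card)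

/-!
Let `P` diagonalize `L R`, so `P⁻¹ (L R) P = D = diag(ξ/2, ξ̄/2)`, and put `Q = L P`. Then
`Q⁻¹ · L (L R)ⁿ R · Q = P⁻¹ (L R)ⁿ (R L) P = Dⁿ C` with `C a b = (ξ_a + 2)/10 · (3 if a = b else 2)`,
so the trace in question is the trace of `∏ Dⁿⁱ C`. Expanding it as a sum over closed paths
`ε : ℤ/k → {0, 1}` and writing `S = ε⁻¹(0)`, a path picks up a factor `3` at each `i` with
`i ∈ S ↔ i + 1 ∈ S` and a factor `2` elsewhere. Those `i` are exactly the positions of `S` and `Sᶜ`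
that do not start a run, and there are `r(S)` of them.
-/

open Finset

theorem List.prod_ofFn_conj {M : Type*} [Monoid M] {a b : M} (hab : a * b = 1) (hba : b * a = 1)
    {m : ℕ} (f : Fin m → M) :
    (List.ofFn fun i => a * f i * b).prod = a * (List.ofFn f).prod * b := by
  induction m with
  | zero => simp [hab]
  | succ m ih =>
    rw [List.ofFn_succ, List.prod_cons, List.ofFn_succ, List.prod_cons, ih]
    simp only [mul_assoc, ← mul_assoc b a, hba, one_mul]

section PathExpansion

variable {ι R : Type*} [Fintype ι] [DecidableEq ι] [CommSemiring R]

theorem Matrix.list_ofFn_prod_apply {m : ℕ} (f : Fin m → Matrix ι ι R) (a b : ι) :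
    (List.ofFn f).prod a b =
      ∑ ε : Fin m → ι,
        if (Fin.cons a ε : Fin (m + 1) → ι) (Fin.last m) = b then
          ∏ i, f i ((Fin.cons a ε : Fin (m + 1) → ι) i.castSucc) (ε i)
        else 0 := by
  induction m generalizing a with
  | zero => simp [one_apply]
  | succ m ih =>
    rw [List.ofFn_succ, List.prod_cons, mul_apply,
      ← (Fin.consEquiv fun _ => ι).sum_comp, Fintype.sum_prod_type]
    refine sum_congr rfl fun c _ => ?_
    simp only [ih, mul_sum, Fin.consEquiv_apply, ← Fin.succ_last, Fin.cons_succ, mul_ite,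
      mul_zero, Fin.prod_univ_succ, Fin.castSucc_zero, Fin.cons_zero, ← Fin.succ_castSucc]

theorem Matrix.trace_list_ofFn_prod (f : Fin k → Matrix ι ι R) :
    trace (List.ofFn f).prod = ∑ ε : Fin k → ι, ∏ i, f i (ε i) (ε (i + 1)) := by
  obtain ⟨m, rfl⟩ : ∃ m, k = m + 1 := Nat.exists_eq_succ_of_ne_zero (NeZero.ne k)
  simp only [trace, diag_apply, list_ofFn_prod_apply, ← Fin.succ_last, Fin.cons_succ]
  rw [sum_comm]
  simp only [sum_ite_eq, mem_univ, if_true]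
  -- the closed path `Fin.cons (ε (Fin.last m)) ε` is `ε` rotated back by one step
  refine (Fintype.sum_equiv ((Equiv.addRight (1 : Fin (m + 1))).symm.arrowCongr (Equiv.refl ι))
    _ _ fun η => ?_).symm
  refine prod_congr rfl fun i _ => ?_
  cases i using Fin.cases <;> simp [Fin.last_add_one, Fin.coeSucc_eq_succ]

end PathExpansion

def finsetEquivFinTwo (α : Type*) [Fintype α] [DecidableEq α] : Finset α ≃ (α → Fin 2) where
  toFun S i := if i ∈ S then 0 else 1
  invFun ε := {i | ε i = 0}
  left_inv S := by ext i; by_cases h : i ∈ S <;> simp [h]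
  right_inv ε := by funext i; rcases Fin.exists_fin_two.mp ⟨ε i, rfl⟩ with h | h <;> simp [h]

section FinsetEquivFinTwo

variable {α : Type*} [Fintype α] [DecidableEq α]

lemma finsetEquivFinTwo_apply_eq_iff (S : Finset α) (i j : α) :
    finsetEquivFinTwo α S i = finsetEquivFinTwo α S j ↔ (i ∈ S ↔ j ∈ S) := by
  by_cases hi : i ∈ S <;> by_cases hj : j ∈ S <;> simp [finsetEquivFinTwo, hi, hj]

lemma prod_finsetEquivFinTwo {M : Type*} [CommMonoid M] (S : Finset α) (f : α → Fin 2 → M) :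
    ∏ i, f i (finsetEquivFinTwo α S i) = (∏ i ∈ S, f i 0) * ∏ i ∈ Sᶜ, f i 1 := by
  simp only [finsetEquivFinTwo, Equiv.coe_fn_mk, apply_ite (f _), prod_ite, filter_not,
    filter_mem_eq_inter, univ_inter, compl_eq_univ_sdiff]

end FinsetEquivFinTwo

lemma card_runStarts (S : Finset (Fin k)) : #(runStarts S) = #{i | i ∉ S ∧ i + 1 ∈ S} := by
  refine card_nbij' (· - 1) (· + 1) ?_ ?_ ?_ ?_ <;> intro i <;> simp +contextual [runStarts]

lemma card_runStarts_add_card_runStarts_compl (S : Finset (Fin k)) :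
    #(runStarts S) + #(runStarts Sᶜ) = #{i | ¬(i ∈ S ↔ i + 1 ∈ S)} := by
  rw [card_runStarts, card_runStarts, ← card_union_of_disjoint]
  · congr 1; ext i; simp only [mem_filter, mem_univ, true_and, mem_union, mem_compl]; tauto
  · rw [disjoint_filter]; simp +contextual

lemma rStat_eq_card_filter (S : Finset (Fin k)) : rStat S = #{i | i ∈ S ↔ i + 1 ∈ S} := by
  have hsplit := card_filter_add_card_filter_not (s := univ) (fun i : Fin k => i ∈ S ↔ i + 1 ∈ S)
  rw [← card_runStarts_add_card_runStarts_compl, card_univ, Fintype.card_fin] at hsplit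
  have hS : #S + #Sᶜ = k := by rw [card_add_card_compl, Fintype.card_fin]
  have h₁ : #(runStarts S) ≤ #S := card_filter_le _ _
  have h₂ : #(runStarts Sᶜ) ≤ #Sᶜ := card_filter_le _ _
  unfold rStat
  split_ifs with h
  · rcases h with rfl | rfl <;> simp
  · omega

lemma prod_ite_mem_iff_mem_add_one {M : Type*} [CommMonoid M] (S : Finset (Fin k)) (a b : M) :
    ∏ i, (if (i ∈ S ↔ i + 1 ∈ S) then a else b) = a ^ rStat S * b ^ (k - rStat S) := by
  have hsplit := card_filter_add_card_filter_not (s := univ) (fun i : Fin k => i ∈ S ↔ i + 1 ∈ S)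
  rw [card_univ, Fintype.card_fin] at hsplit
  rw [prod_ite, prod_const, prod_const, rStat_eq_card_filter]
  congr 2
  omega

def ξ : Fin 2 → ℝ := ![3 + √5, 3 - √5]

-- `L * P`, where the columns of `P = !![2, -2; √5 - 1, 1 + √5]` are eigenvectors of `L * R`.
def conjQ : Matrix (Fin 2) (Fin 2) ℝ := !![1 + √5, √5 - 1; √5 - 1, 1 + √5]

def conjQinv : Matrix (Fin 2) (Fin 2) ℝ :=
  !![(5 + √5) / 20, (√5 - 5) / 20; (√5 - 5) / 20, (5 + √5) / 20]

def blockC : Matrix (Fin 2) (Fin 2) ℝ := of fun a b => (ξ a + 2) / 10 * if a = b then 3 else 2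

lemma conjQ_mul_conjQinv : conjQ * conjQinv = 1 := by
  ext i j
  fin_cases i <;> fin_cases j <;> simp [conjQ, conjQinv, mul_apply] <;>
    linarith [sq_sqrt (show (0 : ℝ) ≤ 5 by norm_num)]

lemma conjQinv_mul_conjQ : conjQinv * conjQ = 1 := by
  ext i j
  fin_cases i <;> fin_cases j <;> simp [conjQ, conjQinv, mul_apply] <;>
    linarith [sq_sqrt (show (0 : ℝ) ≤ 5 by norm_num)]

lemma semiconjBy_Lm_mul_Rm :
    SemiconjBy (conjQinv * Lm) (Lm * Rm) (diagonal fun a => ξ a / 2) := by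
  unfold SemiconjBy
  ext i j
  fin_cases i <;> fin_cases j <;> simp [conjQinv, Lm, Rm, ξ, mul_apply] <;>
    linarith [sq_sqrt (show (0 : ℝ) ≤ 5 by norm_num)]

lemma conjQinv_mul_Lm_mul_Rm_mul_conjQ : conjQinv * Lm * Rm * conjQ = blockC := by
  ext i j
  fin_cases i <;> fin_cases j <;> simp [conjQ, conjQinv, blockC, Lm, Rm, ξ, mul_apply] <;>
    linarith [sq_sqrt (show (0 : ℝ) ≤ 5 by norm_num)]

lemma block_eq_conjQ_mul_mul_conjQinv (n : ℕ) :
    Lm * (Lm * Rm) ^ n * Rm = conjQ * (diagonal (fun a => (ξ a / 2) ^ n) * blockC) * conjQinv := by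
  have hconj : conjQinv * (Lm * (Lm * Rm) ^ n * Rm) * conjQ =
      diagonal (fun a => (ξ a / 2) ^ n) * blockC :=
    calc conjQinv * (Lm * (Lm * Rm) ^ n * Rm) * conjQ
        = (conjQinv * Lm) * (Lm * Rm) ^ n * (Rm * conjQ) := by simp only [mul_assoc]
      _ = (diagonal fun a => ξ a / 2) ^ n * (conjQinv * Lm * Rm * conjQ) := by
        rw [(semiconjBy_Lm_mul_Rm.pow_right n).eq]; simp only [mul_assoc]
      _ = _ := by rw [conjQinv_mul_Lm_mul_Rm_mul_conjQ, diagonal_pow]; rfl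
  rw [← hconj]
  simp only [mul_assoc, conjQ_mul_conjQinv, mul_one]
  simp only [← mul_assoc, conjQ_mul_conjQinv, one_mul]

lemma prod_diagonal_mul_blockC_apply (S : Finset (Fin k)) (n : Fin k → ℕ) :
    ∏ i, (diagonal (fun a => (ξ a / 2) ^ n i) * blockC)
        (finsetEquivFinTwo _ S i) (finsetEquivFinTwo _ S (i + 1)) =
      1 / (10 ^ k * 2 ^ ∑ i, n i) *
        (3 ^ rStat S * 2 ^ (k - rStat S) * (ξ 0 + 2) ^ #S * (ξ 1 + 2) ^ #Sᶜ *
          ξ 0 ^ (∑ i ∈ S, n i) * ξ 1 ^ (∑ i ∈ Sᶜ, n i)) := by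
  simp only [diagonal_mul, blockC, of_apply, finsetEquivFinTwo_apply_eq_iff, prod_mul_distrib,
    prod_ite_mem_iff_mem_add_one]
  rw [prod_finsetEquivFinTwo S (fun i a => (ξ a / 2) ^ n i),
    prod_finsetEquivFinTwo S (fun _ a => (ξ a + 2) / 10)]
  simp only [prod_pow_eq_pow_sum, prod_const]
  have h10 : (10 : ℝ) ^ k = 10 ^ #S * 10 ^ #Sᶜ := by
    rw [← pow_add, card_add_card_compl, Fintype.card_fin]
  rw [← sum_add_sum_compl S n, h10]
  simp only [div_pow, pow_add]
  field_simp

theorem stmt_17 (n : Fin k → ℕ) :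
    Matrix.trace (List.ofFn (fun i => Lm * (Lm * Rm) ^ (n i) * Rm)).prod =
      (1 / (10 ^ k * 2 ^ (∑ i, n i))) *
        ∑ S : Finset (Fin k),
          (3 : ℝ) ^ (rStat S) * 2 ^ (k - rStat S) *
            ((3 + Real.sqrt 5) + 2) ^ S.card * ((3 - Real.sqrt 5) + 2) ^ Sᶜ.card *
            (3 + Real.sqrt 5) ^ (∑ i ∈ S, n i) *
            (3 - Real.sqrt 5) ^ (∑ i ∈ Sᶜ, n i) := by
  simp only [block_eq_conjQ_mul_mul_conjQinv]
  rw [List.prod_ofFn_conj conjQ_mul_conjQinv conjQinv_mul_conjQ, trace_mul_cycle,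
    conjQinv_mul_conjQ, one_mul, trace_list_ofFn_prod, mul_sum,
    ← (finsetEquivFinTwo (Fin k)).sum_comp]
  exact sum_congr rfl fun S _ => prod_diagonal_mul_blockC_apply S n
end
end
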